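/- Let z ∈ [−1, 1] and take the five-point scheme with parameters σ = 0 and τ = −(1 − z²)/12. If Φ : ℤ → ℝ is square-summable, then the sequence Ψ with Ψ_j := (A(z)Φ)_j is square-summable and ∑_{j∈ℤ} Ψ_j² ≤ ∑_{j∈ℤ} Φ_j²; that is, A(z) is a contraction on ℓ²(ℤ). -/
import Mathlib


/-- Backward difference `(DΦ)_j = Φ_j - Φ_{j-1}`. -/
noncomputable def Dd (Φ : ℤ → ℝ) (j : ℤ) : ℝ := Φ j - Φ (j - 1)

/-- Centered difference `(D₀Φ)_j = (Φ_{j+1} - Φ_{j-1})/2`. -/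
noncomputable def D0 (Φ : ℤ → ℝ) (j : ℤ) : ℝ := (Φ (j + 1) - Φ (j - 1)) / 2

/-- Discrete Laplacian `(ΔΦ)_j = Φ_{j-1} - 2Φ_j + Φ_{j+1}`. -/
noncomputable def Lap (Φ : ℤ → ℝ) (j : ℤ) : ℝ := Φ (j - 1) - 2 * Φ j + Φ (j + 1)

/-- `(DΔΦ)_j = (ΔΦ)_j - (ΔΦ)_{j-1}`. -/
noncomputable def DLap (Φ : ℤ → ℝ) (j : ℤ) : ℝ := Lap Φ j - Lap Φ (j - 1)

/-- `(D₀ΔΦ)_j = (-Φ_{j-2} + 2Φ_{j-1} - 2Φ_{j+1} + Φ_{j+2})/2`. -/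
noncomputable def D0Lap (Φ : ℤ → ℝ) (j : ℤ) : ℝ :=
  (-Φ (j - 2) + 2 * Φ (j - 1) - 2 * Φ (j + 1) + Φ (j + 2)) / 2

/-- `(Δ²Φ)_j = Φ_{j-2} - 4Φ_{j-1} + 6Φ_j - 4Φ_{j+1} + Φ_{j+2}`. -/
noncomputable def Lap2 (Φ : ℤ → ℝ) (j : ℤ) : ℝ :=
  Φ (j - 2) - 4 * Φ (j - 1) + 6 * Φ j - 4 * Φ (j + 1) + Φ (j + 2)

/-- The five point scheme `A(z)Φ = Φ - z D₀Φ + (z²/2) ΔΦ + σ D₀ΔΦ + τ Δ²Φ`. -/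
noncomputable def A5 (z σ τ : ℝ) (Φ : ℤ → ℝ) (j : ℤ) : ℝ :=
  Φ j - z * D0 Φ j + z ^ 2 / 2 * Lap Φ j + σ * D0Lap Φ j + τ * Lap2 Φ j

lemma sq_shift_summable (Φ : ℤ → ℝ) (hΦ : Summable fun j : ℤ => (Φ j)^2) (k : ℤ) :
    Summable (fun j : ℤ => (Φ (j + k))^2) :=
  ((Equiv.addRight k).summable_iff (f := fun j : ℤ => (Φ j)^2)).mpr hΦ

lemma mul_shift_summable (Φ : ℤ → ℝ) (hΦ : Summable fun j : ℤ => (Φ j)^2) (k l : ℤ) :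
    Summable (fun j : ℤ => Φ (j + k) * Φ (j + l)) := by
  have h1 := sq_shift_summable Φ hΦ k
  have h2 := sq_shift_summable Φ hΦ l
  apply Summable.of_abs
  apply Summable.of_nonneg_of_le (fun j => abs_nonneg _) (fun j => ?_) ((h1.add h2).div_const 2)
  rw [abs_mul]
  nlinarith [sq_nonneg (|Φ (j+k)| - |Φ (j+l)|), sq_abs (Φ (j+k)), sq_abs (Φ (j+l)),
    abs_nonneg (Φ (j+k)), abs_nonneg (Φ (j+l))]

lemma piece_gen (Φ : ℤ → ℝ) (hΦ : Summable fun j : ℤ => (Φ j)^2) (k m : ℤ) :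
    HasSum (fun j : ℤ => Φ (j + k) * Φ (j + (k + m))) (∑' j : ℤ, Φ j * Φ (j + m)) := by
  have hs : Summable (fun j : ℤ => Φ (j + k) * Φ (j + (k + m))) := by
    simpa only [add_assoc] using mul_shift_summable Φ hΦ k (k + m)
  have he : ∑' j : ℤ, Φ (j + k) * Φ (j + (k + m)) = ∑' j : ℤ, Φ j * Φ (j + m) := by
    have h := (Equiv.addRight k).tsum_eq (f := fun j : ℤ => Φ j * Φ (j + m))
    simp only [Equiv.coe_addRight] at h
    rw [← h]
    exact tsum_congr fun j => by rw [add_assoc]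
  exact he ▸ hs.hasSum
lemma tap_sum (Φ : ℤ → ℝ) (hΦ : Summable fun j : ℤ => (Φ j)^2) (a b c d e : ℝ) :
    Summable (fun j : ℤ => (a * Φ (j - 2) + b * Φ (j - 1) + c * Φ j + d * Φ (j + 1) + e * Φ (j + 2))^2) ∧
    ∑' j : ℤ, (a * Φ (j - 2) + b * Φ (j - 1) + c * Φ j + d * Φ (j + 1) + e * Φ (j + 2))^2
      = (a^2 + b^2 + c^2 + d^2 + e^2) * (∑' j : ℤ, Φ j * Φ j)
      + (2*(a*b + b*c + c*d + d*e)) * (∑' j : ℤ, Φ j * Φ (j + 1))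
      + (2*(a*c + b*d + c*e)) * (∑' j : ℤ, Φ j * Φ (j + 2))
      + (2*(a*d + b*e)) * (∑' j : ℤ, Φ j * Φ (j + 3))
      + (2*(a*e)) * (∑' j : ℤ, Φ j * Φ (j + 4)) := by
  have h0 : HasSum (fun j : ℤ => Φ (j - 2) * Φ (j - 2)) (∑' j : ℤ, Φ j * Φ j) := by
    have h := piece_gen Φ hΦ (-2) 0
    simp only [show (((-2):ℤ) + (0):ℤ) = (-2) from by norm_num, add_zero, zero_add,
      show ∀ j : ℤ, j + (-2:ℤ) = j - 2 from fun j => by ring,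
      show ∀ j : ℤ, j + (-1:ℤ) = j - 1 from fun j => by ring] at h
    exact h
  have h1 : HasSum (fun j : ℤ => Φ (j - 2) * Φ (j - 1)) (∑' j : ℤ, Φ j * Φ (j + 1)) := by
    have h := piece_gen Φ hΦ (-2) 1
    simp only [show (((-2):ℤ) + (1):ℤ) = (-1) from by norm_num, add_zero, zero_add,
      show ∀ j : ℤ, j + (-2:ℤ) = j - 2 from fun j => by ring,
      show ∀ j : ℤ, j + (-1:ℤ) = j - 1 from fun j => by ring] at h
    exact h
  have h2 : HasSum (fun j : ℤ => Φ (j - 2) * Φ j) (∑' j : ℤ, Φ j * Φ (j + 2)) := by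
    have h := piece_gen Φ hΦ (-2) 2
    simp only [show (((-2):ℤ) + (2):ℤ) = (0) from by norm_num, add_zero, zero_add,
      show ∀ j : ℤ, j + (-2:ℤ) = j - 2 from fun j => by ring,
      show ∀ j : ℤ, j + (-1:ℤ) = j - 1 from fun j => by ring] at h
    exact h
  have h3 : HasSum (fun j : ℤ => Φ (j - 2) * Φ (j + 1)) (∑' j : ℤ, Φ j * Φ (j + 3)) := by
    have h := piece_gen Φ hΦ (-2) 3
    simp only [show (((-2):ℤ) + (3):ℤ) = (1) from by norm_num, add_zero, zero_add,
      show ∀ j : ℤ, j + (-2:ℤ) = j - 2 from fun j => by ring,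
      show ∀ j : ℤ, j + (-1:ℤ) = j - 1 from fun j => by ring] at h
    exact h
  have h4 : HasSum (fun j : ℤ => Φ (j - 2) * Φ (j + 2)) (∑' j : ℤ, Φ j * Φ (j + 4)) := by
    have h := piece_gen Φ hΦ (-2) 4
    simp only [show (((-2):ℤ) + (4):ℤ) = (2) from by norm_num, add_zero, zero_add,
      show ∀ j : ℤ, j + (-2:ℤ) = j - 2 from fun j => by ring,
      show ∀ j : ℤ, j + (-1:ℤ) = j - 1 from fun j => by ring] at h
    exact h
  have h5 : HasSum (fun j : ℤ => Φ (j - 1) * Φ (j - 1)) (∑' j : ℤ, Φ j * Φ j) := by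
    have h := piece_gen Φ hΦ (-1) 0
    simp only [show (((-1):ℤ) + (0):ℤ) = (-1) from by norm_num, add_zero, zero_add,
      show ∀ j : ℤ, j + (-2:ℤ) = j - 2 from fun j => by ring,
      show ∀ j : ℤ, j + (-1:ℤ) = j - 1 from fun j => by ring] at h
    exact h
  have h6 : HasSum (fun j : ℤ => Φ (j - 1) * Φ j) (∑' j : ℤ, Φ j * Φ (j + 1)) := by
    have h := piece_gen Φ hΦ (-1) 1
    simp only [show (((-1):ℤ) + (1):ℤ) = (0) from by norm_num, add_zero, zero_add,
      show ∀ j : ℤ, j + (-2:ℤ) = j - 2 from fun j => by ring,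
      show ∀ j : ℤ, j + (-1:ℤ) = j - 1 from fun j => by ring] at h
    exact h
  have h7 : HasSum (fun j : ℤ => Φ (j - 1) * Φ (j + 1)) (∑' j : ℤ, Φ j * Φ (j + 2)) := by
    have h := piece_gen Φ hΦ (-1) 2
    simp only [show (((-1):ℤ) + (2):ℤ) = (1) from by norm_num, add_zero, zero_add,
      show ∀ j : ℤ, j + (-2:ℤ) = j - 2 from fun j => by ring,
      show ∀ j : ℤ, j + (-1:ℤ) = j - 1 from fun j => by ring] at h
    exact h
  have h8 : HasSum (fun j : ℤ => Φ (j - 1) * Φ (j + 2)) (∑' j : ℤ, Φ j * Φ (j + 3)) := by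
    have h := piece_gen Φ hΦ (-1) 3
    simp only [show (((-1):ℤ) + (3):ℤ) = (2) from by norm_num, add_zero, zero_add,
      show ∀ j : ℤ, j + (-2:ℤ) = j - 2 from fun j => by ring,
      show ∀ j : ℤ, j + (-1:ℤ) = j - 1 from fun j => by ring] at h
    exact h
  have h9 : HasSum (fun j : ℤ => Φ j * Φ j) (∑' j : ℤ, Φ j * Φ j) := by
    have h := piece_gen Φ hΦ 0 0
    simp only [show (((0):ℤ) + (0):ℤ) = (0) from by norm_num, add_zero, zero_add,
      show ∀ j : ℤ, j + (-2:ℤ) = j - 2 from fun j => by ring,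
      show ∀ j : ℤ, j + (-1:ℤ) = j - 1 from fun j => by ring] at h
    exact h
  have h10 : HasSum (fun j : ℤ => Φ j * Φ (j + 1)) (∑' j : ℤ, Φ j * Φ (j + 1)) := by
    have h := piece_gen Φ hΦ 0 1
    simp only [show (((0):ℤ) + (1):ℤ) = (1) from by norm_num, add_zero, zero_add,
      show ∀ j : ℤ, j + (-2:ℤ) = j - 2 from fun j => by ring,
      show ∀ j : ℤ, j + (-1:ℤ) = j - 1 from fun j => by ring] at h
    exact h
  have h11 : HasSum (fun j : ℤ => Φ j * Φ (j + 2)) (∑' j : ℤ, Φ j * Φ (j + 2)) := by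
    have h := piece_gen Φ hΦ 0 2
    simp only [show (((0):ℤ) + (2):ℤ) = (2) from by norm_num, add_zero, zero_add,
      show ∀ j : ℤ, j + (-2:ℤ) = j - 2 from fun j => by ring,
      show ∀ j : ℤ, j + (-1:ℤ) = j - 1 from fun j => by ring] at h
    exact h
  have h12 : HasSum (fun j : ℤ => Φ (j + 1) * Φ (j + 1)) (∑' j : ℤ, Φ j * Φ j) := by
    have h := piece_gen Φ hΦ 1 0
    simp only [show (((1):ℤ) + (0):ℤ) = (1) from by norm_num, add_zero, zero_add,
      show ∀ j : ℤ, j + (-2:ℤ) = j - 2 from fun j => by ring,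
      show ∀ j : ℤ, j + (-1:ℤ) = j - 1 from fun j => by ring] at h
    exact h
  have h13 : HasSum (fun j : ℤ => Φ (j + 1) * Φ (j + 2)) (∑' j : ℤ, Φ j * Φ (j + 1)) := by
    have h := piece_gen Φ hΦ 1 1
    simp only [show (((1):ℤ) + (1):ℤ) = (2) from by norm_num, add_zero, zero_add,
      show ∀ j : ℤ, j + (-2:ℤ) = j - 2 from fun j => by ring,
      show ∀ j : ℤ, j + (-1:ℤ) = j - 1 from fun j => by ring] at h
    exact h
  have h14 : HasSum (fun j : ℤ => Φ (j + 2) * Φ (j + 2)) (∑' j : ℤ, Φ j * Φ j) := by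
    have h := piece_gen Φ hΦ 2 0
    simp only [show (((2):ℤ) + (0):ℤ) = (2) from by norm_num, add_zero, zero_add,
      show ∀ j : ℤ, j + (-2:ℤ) = j - 2 from fun j => by ring,
      show ∀ j : ℤ, j + (-1:ℤ) = j - 1 from fun j => by ring] at h
    exact h
  have H : HasSum (fun j : ℤ =>
        a * a * (Φ (j - 2) * Φ (j - 2))
        + 2 * (a * b) * (Φ (j - 2) * Φ (j - 1))
        + 2 * (a * c) * (Φ (j - 2) * Φ j)
        + 2 * (a * d) * (Φ (j - 2) * Φ (j + 1))
        + 2 * (a * e) * (Φ (j - 2) * Φ (j + 2))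
        + b * b * (Φ (j - 1) * Φ (j - 1))
        + 2 * (b * c) * (Φ (j - 1) * Φ j)
        + 2 * (b * d) * (Φ (j - 1) * Φ (j + 1))
        + 2 * (b * e) * (Φ (j - 1) * Φ (j + 2))
        + c * c * (Φ j * Φ j)
        + 2 * (c * d) * (Φ j * Φ (j + 1))
        + 2 * (c * e) * (Φ j * Φ (j + 2))
        + d * d * (Φ (j + 1) * Φ (j + 1))
        + 2 * (d * e) * (Φ (j + 1) * Φ (j + 2))
        + e * e * (Φ (j + 2) * Φ (j + 2)))
      (a * a * (∑' j : ℤ, Φ j * Φ j)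
        + 2 * (a * b) * (∑' j : ℤ, Φ j * Φ (j + 1))
        + 2 * (a * c) * (∑' j : ℤ, Φ j * Φ (j + 2))
        + 2 * (a * d) * (∑' j : ℤ, Φ j * Φ (j + 3))
        + 2 * (a * e) * (∑' j : ℤ, Φ j * Φ (j + 4))
        + b * b * (∑' j : ℤ, Φ j * Φ j)
        + 2 * (b * c) * (∑' j : ℤ, Φ j * Φ (j + 1))
        + 2 * (b * d) * (∑' j : ℤ, Φ j * Φ (j + 2))
        + 2 * (b * e) * (∑' j : ℤ, Φ j * Φ (j + 3))
        + c * c * (∑' j : ℤ, Φ j * Φ j)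
        + 2 * (c * d) * (∑' j : ℤ, Φ j * Φ (j + 1))
        + 2 * (c * e) * (∑' j : ℤ, Φ j * Φ (j + 2))
        + d * d * (∑' j : ℤ, Φ j * Φ j)
        + 2 * (d * e) * (∑' j : ℤ, Φ j * Φ (j + 1))
        + e * e * (∑' j : ℤ, Φ j * Φ j)) :=
    (((((((((((((((h0.mul_left (a * a)).add (h1.mul_left (2 * (a * b)))).add (h2.mul_left (2 * (a * c)))).add (h3.mul_left (2 * (a * d)))).add (h4.mul_left (2 * (a * e)))).add (h5.mul_left (b * b))).add (h6.mul_left (2 * (b * c)))).add (h7.mul_left (2 * (b * d)))).add (h8.mul_left (2 * (b * e)))).add (h9.mul_left (c * c))).add (h10.mul_left (2 * (c * d)))).add (h11.mul_left (2 * (c * e)))).add (h12.mul_left (d * d))).add (h13.mul_left (2 * (d * e)))).add (h14.mul_left (e * e)))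
  have hfe : (fun j : ℤ =>
        a * a * (Φ (j - 2) * Φ (j - 2))
        + 2 * (a * b) * (Φ (j - 2) * Φ (j - 1))
        + 2 * (a * c) * (Φ (j - 2) * Φ j)
        + 2 * (a * d) * (Φ (j - 2) * Φ (j + 1))
        + 2 * (a * e) * (Φ (j - 2) * Φ (j + 2))
        + b * b * (Φ (j - 1) * Φ (j - 1))
        + 2 * (b * c) * (Φ (j - 1) * Φ j)
        + 2 * (b * d) * (Φ (j - 1) * Φ (j + 1))
        + 2 * (b * e) * (Φ (j - 1) * Φ (j + 2))
        + c * c * (Φ j * Φ j)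
        + 2 * (c * d) * (Φ j * Φ (j + 1))
        + 2 * (c * e) * (Φ j * Φ (j + 2))
        + d * d * (Φ (j + 1) * Φ (j + 1))
        + 2 * (d * e) * (Φ (j + 1) * Φ (j + 2))
        + e * e * (Φ (j + 2) * Φ (j + 2)))
      = (fun j : ℤ => (a * Φ (j - 2) + b * Φ (j - 1) + c * Φ j + d * Φ (j + 1) + e * Φ (j + 2))^2) :=
    funext fun j => by ring
  rw [hfe] at H
  exact ⟨H.summable, H.tsum_eq.trans (by ring)⟩

/-- The five point scheme with `σ = 0`, `τ = -(1 - z²)/12` is a contraction on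
`ℓ²(ℤ)` for `z ∈ [-1, 1]`. -/
theorem five_point_LF_like_contraction (z : ℝ) (hz : z ∈ Set.Icc (-1 : ℝ) 1)
    (Φ : ℤ → ℝ) (hΦ : Summable (fun j : ℤ => (Φ j) ^ 2)) :
    Summable (fun j : ℤ => (A5 z 0 (-(1 - z ^ 2) / 12) Φ j) ^ 2) ∧
      ∑' j : ℤ, (A5 z 0 (-(1 - z ^ 2) / 12) Φ j) ^ 2 ≤ ∑' j : ℤ, (Φ j) ^ 2 := by
  obtain ⟨hz1, hz2⟩ := hz
  have hzz : (0:ℝ) ≤ 1 - z^2 := by nlinarith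
  obtain ⟨hsΨ, htΨ⟩ := tap_sum Φ hΦ (-(1 - z ^ 2) / 12) (z/2 + z^2/2 + (1 - z^2)/3)
    ((1 - z^2)/2) (-z/2 + z^2/2 + (1 - z^2)/3) (-(1 - z ^ 2) / 12)
  obtain ⟨hs1, ht1⟩ := tap_sum Φ hΦ 1 (-4) 6 (-4) 1
  obtain ⟨hs2, ht2⟩ := tap_sum Φ hΦ 1 (-2) 0 2 (-1)
  obtain ⟨hs3, ht3⟩ := tap_sum Φ hΦ 1 0 (-2) 0 1
  have hA : ∀ j : ℤ, A5 z 0 (-(1 - z ^ 2) / 12) Φ j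
      = (-(1 - z ^ 2) / 12) * Φ (j - 2) + (z/2 + z^2/2 + (1 - z^2)/3) * Φ (j - 1)
        + ((1 - z^2)/2) * Φ j + (-z/2 + z^2/2 + (1 - z^2)/3) * Φ (j + 1)
        + (-(1 - z ^ 2) / 12) * Φ (j + 2) := by
    intro j
    simp only [A5, D0, Lap, D0Lap, Lap2]
    ring
  constructor
  · exact hsΨ.congr fun j => by rw [hA j]
  · have eA : ∑' j : ℤ, (A5 z 0 (-(1 - z ^ 2) / 12) Φ j) ^ 2
        = ∑' j : ℤ, ((-(1 - z ^ 2) / 12) * Φ (j - 2) + (z/2 + z^2/2 + (1 - z^2)/3) * Φ (j - 1)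
          + ((1 - z^2)/2) * Φ j + (-z/2 + z^2/2 + (1 - z^2)/3) * Φ (j + 1)
          + (-(1 - z ^ 2) / 12) * Φ (j + 2))^2 := tsum_congr fun j => by rw [hA j]
    have hT1 : (0:ℝ) ≤ ∑' j : ℤ, ((1:ℝ) * Φ (j - 2) + (-4) * Φ (j - 1) + 6 * Φ j
        + (-4) * Φ (j + 1) + 1 * Φ (j + 2))^2 := tsum_nonneg fun j => sq_nonneg _
    have hT2 : (0:ℝ) ≤ ∑' j : ℤ, ((1:ℝ) * Φ (j - 2) + (-2) * Φ (j - 1) + 0 * Φ j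
        + 2 * Φ (j + 1) + (-1) * Φ (j + 2))^2 := tsum_nonneg fun j => sq_nonneg _
    have hT3 : (0:ℝ) ≤ ∑' j : ℤ, ((1:ℝ) * Φ (j - 2) + 0 * Φ (j - 1) + (-2) * Φ j
        + 0 * Φ (j + 1) + 1 * Φ (j + 2))^2 := tsum_nonneg fun j => sq_nonneg _
    rw [ht1] at hT1
    rw [ht2] at hT2
    rw [ht3] at hT3
    have hpow : ∑' j : ℤ, (Φ j) ^ 2 = ∑' j : ℤ, Φ j * Φ j := tsum_congr fun j => by ring
    have hp1 := mul_nonneg (mul_nonneg hzz (show (0:ℝ) ≤ (2 + z^2)/576 by positivity)) hT1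
    have hp2 := mul_nonneg (mul_nonneg hzz (show (0:ℝ) ≤ (2 + z^2)/96 by positivity)) hT2
    have hp3 := mul_nonneg (mul_nonneg hzz (show (0:ℝ) ≤ (2 + 3*z^2)/192 by positivity)) hT3
    rw [eA, htΨ, hpow]
    linarith [hp1, hp2, hp3]
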